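/- arXiv:math/0211447 — 3 statements merged into one kernel-verified Lean document; each statement's English description precedes it below -/
import Mathlib

section
/- Let f ∈ 𝔽_p[u₁,…,u_{d-1}, u_d^{±1}] be such that f_min, the sum of the terms of f whose exponents are minimal with respect to the order m ≺_{e_d} n iff (m₁,…,m_{d−1}) <_lex (n₁,…,n_{d−1}), is a Laurent polynomial in u_d alone that is NOT a single monomial. Let T = {n ∈ ℤ^d : n_i ≥ 0 for some i < d} and m = −e₁−⋯−e_{d−1}. Then there is no polynomial h ∈ 𝔽_p[u₁^{±1},…,u_d^{±1}] and no g supported on T with u^m − g = h·f. -/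
/-!
Split `h = h' + h''` with `h''` supported on `T` and `h'` on the complement `N` of `T`. As the
prefixes of the exponents of `f` are nonnegative, `g` and `h'' f` vanish on `N`, so `h' f` agrees
with `u^m` on `N`; in particular `h' ≠ 0`. Minimal parts multiply, `(h' f)_min = h'_min f_min`,
and since `ℤ^d` has the two-unique-sums property, a product of a nonzero polynomial with a
non-monomial is a non-monomial. So `h' f` has two distinct monomials with exponents in `N`,
while `u^m` has one.
-/

open Finset AddMonoidAlgebra

/-- Comparing exponents through `lexFst` is the order `≺_{e_d}` of the statement. -/
def lexFst {ι : Type*} : (ι → ℤ) × ℤ →+ Lex (ι → ℤ) where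
  toFun n := toLex n.1
  map_zero' := rfl
  map_add' _ _ := rfl

namespace AddMonoidAlgebra

variable {R G : Type*} [Semiring R]

section Filter

variable (p : G → Prop) [DecidablePred p]

def filter (x : R[G]) : R[G] := ofCoeff (x.coeff.filter p)

lemma filter_add_filter_not (x : R[G]) : x.filter p + x.filter (¬p ·) = x :=
  coeff_injective (Finsupp.filter_add_filter_not x.coeff p)

lemma mem_support_filter {x : R[G]} {a : G} :
    a ∈ (x.filter p).coeff.support ↔ a ∈ x.coeff.support ∧ p a :=
  mem_filter

end Filter

lemma coeff_mul_eq_zero_of_forall_add_ne [Add G] {x y : R[G]} {n : G}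
    (h : ∀ a ∈ x.coeff.support, ∀ b ∈ y.coeff.support, a + b ≠ n) : (x * y).coeff n = 0 := by
  classical
  by_contra hn
  obtain ⟨a, ha, b, hb, hab⟩ :=
    mem_add.1 (support_coeff_mul_subset x y (Finsupp.mem_support_iff.2 hn))
  exact h a ha b hb hab

lemma coeff_mul_eq_coeff_filter_mul [Add G] {x y : R[G]} {n : G} (p : G → Prop) [DecidablePred p]
    (h : ∀ a ∈ x.coeff.support, ∀ b ∈ y.coeff.support, a + b = n → p a) :
    (x * y).coeff n = (x.filter p * y).coeff n := by
  have hnp : (x.filter (¬p ·) * y).coeff n = 0 :=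
    coeff_mul_eq_zero_of_forall_add_ne fun a ha b hb hab =>
      ((mem_support_filter _).1 ha).2 (h a ((mem_support_filter _).1 ha).1 b hb hab)
  rw [← filter_add_filter_not p x, add_mul, coeff_add, Finsupp.add_apply, hnp, add_zero,
    filter_add_filter_not]

lemma coeff_mul_eq_coeff_mul_filter [Add G] {x y : R[G]} {n : G} (q : G → Prop) [DecidablePred q]
    (h : ∀ a ∈ x.coeff.support, ∀ b ∈ y.coeff.support, a + b = n → q b) :
    (x * y).coeff n = (x * y.filter q).coeff n := by
  have hnq : (x * y.filter (¬q ·)).coeff n = 0 :=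
    coeff_mul_eq_zero_of_forall_add_ne fun a ha b hb hab =>
      ((mem_support_filter _).1 hb).2 (h a ha b ((mem_support_filter _).1 hb).1 hab)
  rw [← filter_add_filter_not q y, mul_add, coeff_add, Finsupp.add_apply, hnq, add_zero,
    filter_add_filter_not]

lemma coeff_mul_eq_coeff_filter_mul_filter [Add G] {x y : R[G]} {n : G} (p q : G → Prop)
    [DecidablePred p] [DecidablePred q]
    (h : ∀ a ∈ x.coeff.support, ∀ b ∈ y.coeff.support, a + b = n → p a ∧ q b) :
    (x * y).coeff n = (x.filter p * y.filter q).coeff n := by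
  rw [coeff_mul_eq_coeff_filter_mul p fun a ha b hb hab => (h a ha b hb hab).1,
    coeff_mul_eq_coeff_mul_filter q fun a ha b hb hab =>
      (h a ((mem_support_filter _).1 ha).1 b hb hab).2]

lemma coeff_mul_eq_coeff_filter_mul_filter_of_le [AddZeroClass G] {Γ : Type*} [AddCommMonoid Γ]
    [PartialOrder Γ] [IsOrderedCancelAddMonoid Γ] (ψ : G →+ Γ) {x y : R[G]} {c c' : Γ}
    (hx : ∀ a ∈ x.coeff.support, c ≤ ψ a) (hy : ∀ b ∈ y.coeff.support, c' ≤ ψ b)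
    {n : G} (hn : ψ n = c + c') [DecidableEq Γ] :
    (x * y).coeff n = (x.filter (ψ · = c) * y.filter (ψ · = c')).coeff n :=
  coeff_mul_eq_coeff_filter_mul_filter _ _ fun a ha b hb hab =>
    ((add_eq_add_iff_eq_and_eq (hx a ha) (hy b hb)).1 (by rw [← map_add, hab, hn])).imp
      Eq.symm Eq.symm

lemma one_lt_card_support_mul [NoZeroDivisors R] [Add G] [TwoUniqueSums G] {x y : R[G]}
    (hx : x ≠ 0) (hy : 1 < #y.coeff.support) : 1 < #(x * y).coeff.support := by
  have hx' : 0 < #x.coeff.support := by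
    rwa [card_pos, Finsupp.support_nonempty_iff, Ne, coeff_eq_zero]
  obtain ⟨⟨a₁, b₁⟩, h₁, ⟨a₂, b₂⟩, h₂, hne, hu₁, hu₂⟩ :=
    TwoUniqueSums.uniqueAdd_of_one_lt_card
      (Nat.one_lt_mul_iff.2 ⟨hx', hy.trans' one_pos, Or.inr hy⟩)
  rw [mem_product] at h₁ h₂
  have hmem : ∀ a b, UniqueAdd x.coeff.support y.coeff.support a b → a ∈ x.coeff.support →
      b ∈ y.coeff.support → a + b ∈ (x * y).coeff.support := fun a b hu ha hb => by
    rw [Finsupp.mem_support_iff, coeff_mul_add_of_uniqueAdd hu]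
    exact mul_ne_zero (Finsupp.mem_support_iff.1 ha) (Finsupp.mem_support_iff.1 hb)
  refine one_lt_card.2 ⟨_, hmem _ _ hu₁ h₁.1 h₁.2, _, hmem _ _ hu₂ h₂.1 h₂.2, fun h => hne ?_⟩
  obtain ⟨rfl, rfl⟩ := hu₁ h₂.1 h₂.2 h.symm
  rfl

variable {ι : Type*}

lemma coeff_mul_eq_coeff_filter_neg_mul [DecidablePred fun a : (ι → ℤ) × ℤ => ∀ i, a.1 i < 0]
    {x y : R[(ι → ℤ) × ℤ]}
    (hy : ∀ b ∈ y.coeff.support, ∀ i, 0 ≤ b.1 i) {n : (ι → ℤ) × ℤ} (hn : ∀ i, n.1 i < 0) :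
    (x * y).coeff n = (x.filter (fun a => ∀ i, a.1 i < 0) * y).coeff n := by
  refine coeff_mul_eq_coeff_filter_mul _ fun a _ b hb hab i => ?_
  have hi : a.1 i + b.1 i = n.1 i := by rw [← hab]; rfl
  linarith [hy b hb i, hn i]

lemma exists_ne_mem_support_mul_of_neg [LinearOrder ι] [WellFoundedLT ι] [NoZeroDivisors R]
    {x y : R[(ι → ℤ) × ℤ]} (hx₀ : x ≠ 0) (hx : ∀ a ∈ x.coeff.support, ∀ i, a.1 i < 0)
    (hy : ∀ b ∈ y.coeff.support, ∀ i, 0 ≤ b.1 i)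
    (hy₀ : ∃ b₁ ∈ y.coeff.support, ∃ b₂ ∈ y.coeff.support, b₁ ≠ b₂ ∧ b₁.1 = 0 ∧ b₂.1 = 0) :
    ∃ n₁ ∈ (x * y).coeff.support, ∃ n₂ ∈ (x * y).coeff.support,
      n₁ ≠ n₂ ∧ (∀ i, n₁.1 i < 0) ∧ (∀ i, n₂.1 i < 0) := by
  classical
  have himage : (x.coeff.support.image lexFst).Nonempty := by
    rwa [image_nonempty, Finsupp.support_nonempty_iff, Ne, coeff_eq_zero]
  set c := (x.coeff.support.image lexFst).min' himage
  have hx_lex : ∀ a ∈ x.coeff.support, c ≤ lexFst a :=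
    fun a ha => min'_le _ _ (mem_image_of_mem _ ha)
  have hy_lex : ∀ b ∈ y.coeff.support, 0 ≤ lexFst b := fun b hb => Pi.toLex_monotone (hy b hb)
  set x₀ := x.filter (lexFst · = c)
  set y₀ := y.filter (lexFst · = 0)
  have hx₀ : x₀ ≠ 0 := by
    obtain ⟨a, ha, hac⟩ := mem_image.1 (min'_mem _ himage)
    rw [Ne, ← coeff_eq_zero, ← Finsupp.support_eq_empty, ← Ne, ← nonempty_iff_ne_empty]
    exact ⟨a, (mem_support_filter _).2 ⟨ha, hac⟩⟩
  have hy₀ : 1 < #y₀.coeff.support := by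
    obtain ⟨b₁, hb₁, b₂, hb₂, hne, h₁, h₂⟩ := hy₀
    exact one_lt_card.2
      ⟨b₁, (mem_support_filter _).2 ⟨hb₁, h₁⟩, b₂, (mem_support_filter _).2 ⟨hb₂, h₂⟩, hne⟩
  have hsupp₀ : ∀ n ∈ (x₀ * y₀).coeff.support, n ∈ (x * y).coeff.support ∧ ∀ i, n.1 i < 0 := by
    intro n hn
    obtain ⟨a, ha, b, hb, rfl⟩ := mem_add.1 (support_coeff_mul_subset _ _ hn)
    rw [mem_support_filter] at ha hb
    rw [Finsupp.mem_support_iff, coeff_mul_eq_coeff_filter_mul_filter_of_le lexFst hx_lex hy_lex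
      (by rw [map_add, ha.2, hb.2, add_zero])]
    refine ⟨Finsupp.mem_support_iff.1 hn, fun i => ?_⟩
    have hb0 : b.1 = 0 := hb.2
    simpa [hb0] using hx a ha.1 i
  obtain ⟨n₁, hn₁, n₂, hn₂, hne⟩ := one_lt_card.1 (one_lt_card_support_mul hx₀ hy₀)
  exact ⟨n₁, (hsupp₀ n₁ hn₁).1, n₂, (hsupp₀ n₂ hn₂).1, hne, (hsupp₀ n₁ hn₁).2, (hsupp₀ n₂ hn₂).2⟩

end AddMonoidAlgebra

theorem no_coding_of_nonmonomial_min_part_general (p : ℕ) [Fact p.Prime] (e : ℕ)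
    (f : AddMonoidAlgebra (ZMod p) ((Fin e → ℤ) × ℤ))
    (hsupp : ∀ n ∈ f.coeff.support, ∀ i : Fin e, 0 ≤ n.1 i)
    (hmin : ∃ a ∈ f.coeff.support, ∃ b ∈ f.coeff.support, a ≠ b ∧ a.1 = 0 ∧ b.1 = 0) :
    ∀ g h : AddMonoidAlgebra (ZMod p) ((Fin e → ℤ) × ℤ),
      (↑g.coeff.support ⊆ {n : (Fin e → ℤ) × ℤ | ∃ i : Fin e, 0 ≤ n.1 i}) →
      AddMonoidAlgebra.single (((fun _ => -1 : Fin e → ℤ), (0 : ℤ))) (1 : ZMod p) - g ≠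
        h * f := by
  intro g h hg heq
  set m : (Fin e → ℤ) × ℤ := (fun _ => -1, 0)
  set h' := h.filter fun a => ∀ i, a.1 i < 0
  have hcoeff : ∀ n, (∀ i, n.1 i < 0) → (h' * f).coeff n = (single m 1).coeff n := by
    intro n hn
    have hg0 : g.coeff n = 0 := Finsupp.notMem_support_iff.1 fun hmem => by
      obtain ⟨i, hi⟩ := hg hmem
      exact hi.not_gt (hn i)
    rw [← coeff_mul_eq_coeff_filter_neg_mul hsupp hn, ← heq, coeff_sub, Finsupp.sub_apply, hg0,
      sub_zero]
  by_cases h'0 : h' = 0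
  · simpa [h'0] using hcoeff m fun _ => neg_one_lt_zero
  have hm : ∀ n ∈ (h' * f).coeff.support, (∀ i, n.1 i < 0) → n = m := fun n hn hneg => by
    rw [Finsupp.mem_support_iff, hcoeff n hneg, coeff_single] at hn
    exact (Finsupp.single_apply_ne_zero.1 hn).1
  obtain ⟨n₁, hn₁, n₂, hn₂, hne, hneg₁, hneg₂⟩ := exists_ne_mem_support_mul_of_neg h'0
    (fun a ha => ((mem_support_filter _).1 ha).2) hsupp hmin
  exact hne ((hm n₁ hn₁ hneg₁).trans (hm n₂ hn₂ hneg₂).symm)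

/-- The non-divisibility fact behind the nontriviality of the subgroup `Y₀`:
writing exponents of Laurent monomials in `d = e + 1` variables as pairs
`(prefix, last) ∈ ℤ^e × ℤ`, let `f ∈ 𝔽_p[u₁,…,u_{e},u_d^{±1}]` (so the prefixes of its
support are nonnegative) be such that its lex-minimal part `f_min` is a Laurent polynomial
in the last variable alone which is not a single monomial (at least two terms of `f` have
prefix `0`). With `T = {n : n_i ≥ 0 for some i ≤ e}` and `m = -e₁-⋯-e_e`, there is no
`h` and no `g` supported on `T` with `u^m - g = h·f`. -/
theorem no_coding_of_nonmonomial_min_part (p : ℕ) [Fact p.Prime] (e : ℕ) (he : 1 ≤ e)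
    (f : AddMonoidAlgebra (ZMod p) ((Fin e → ℤ) × ℤ))
    (hsupp : ∀ n ∈ f.coeff.support, ∀ i : Fin e, 0 ≤ n.1 i)
    (hmin : ∃ a ∈ f.coeff.support, ∃ b ∈ f.coeff.support, a ≠ b ∧ a.1 = 0 ∧ b.1 = 0) :
    ∀ g h : AddMonoidAlgebra (ZMod p) ((Fin e → ℤ) × ℤ),
      (↑g.coeff.support ⊆ {n : (Fin e → ℤ) × ℤ | ∃ i : Fin e, 0 ≤ n.1 i}) →
      AddMonoidAlgebra.single (((fun _ => -1 : Fin e → ℤ), (0 : ℤ))) (1 : ZMod p) - g ≠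
        h * f :=
  no_coding_of_nonmonomial_min_part_general p e f hsupp hmin
end

section
/- For Ledrappier's system X₁ with shift action α₁, a vector v ∈ ℝ² \ {0} is non-expansive for α₁ (in the half-space sense) only if v is parallel to an outward normal of an edge of the triangle with vertices (0,0), (1,0), (0,1); in particular the set of non-expansive directions of α₁ is contained in {positive multiples of (−1,0), (0,−1), (1,1)}. -/
/-- Ledrappier's system: the closed shift-invariant subgroup of `𝔽₂^{ℤ²}` defined by
`x_n + x_{n+e₁} + x_{n+e₂} = 0` for all `n ∈ ℤ²`. -/
def LedrappierX : Set ((ℤ × ℤ) → ZMod 2) :=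
  {x | ∀ n : ℤ × ℤ, x n + x (n + (1, 0)) + x (n + (0, 1)) = 0}

/-- A direction `v ≠ 0` is non-expansive for Ledrappier's system only if it is parallel to an
outward normal of an edge of the triangle `conv{(0,0),(1,0),(0,1)}`, i.e. a positive multiple
of `(-1,0)`, `(0,-1)` or `(1,1)`. Stated in the equivalent combinatorial (coding) form: for
any other direction, the half-space `{m : v·m ≤ 0}` codes a strictly larger half-space
`{m : v·m ≤ δ}` for some `δ > 0`, so the direction `v` is expansive. -/
theorem ledrappier_nonexpansive_directions (v : ℝ × ℝ) (hv : v ≠ 0)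
    (hnormal : ¬ ∃ c : ℝ, 0 < c ∧
      (v = c • ((-1 : ℝ), (0 : ℝ)) ∨ v = c • ((0 : ℝ), (-1 : ℝ)) ∨
        v = c • ((1 : ℝ), (1 : ℝ)))) :
    ∃ δ : ℝ, 0 < δ ∧ ∀ x ∈ LedrappierX, ∀ y ∈ LedrappierX,
      (∀ m : ℤ × ℤ, v.1 * (m.1 : ℝ) + v.2 * (m.2 : ℝ) ≤ 0 → x m = y m) →
      ∀ m : ℤ × ℤ, v.1 * (m.1 : ℝ) + v.2 * (m.2 : ℝ) ≤ δ → x m = y m := by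
  obtain ⟨a, b⟩ := v
  -- Trichotomy: one of the three vertices 0, e₁, e₂ is the strict maximizer of v.
  have key : (a < 0 ∧ b < 0) ∨ (0 < a ∧ b < a) ∨ (0 < b ∧ a < b) := by
    by_contra hcon
    push_neg at hcon
    obtain ⟨h1, h2, h3⟩ := hcon
    rcases lt_trichotomy a b with hab | hab | hab
    · -- a < b : then b ≤ 0 (else case C) and b ≥ 0, so b = 0, a < 0
      have hb : b ≤ 0 := by
        by_contra hb
        push_neg at hb
        exact absurd (h3 hb) (not_le.mpr hab)
      have ha : a < 0 := lt_of_lt_of_le hab hb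
      have hb0 : b = 0 := le_antisymm hb (h1 ha)
      exact hnormal ⟨-a, by linarith, Or.inl (by
        simp only [Prod.smul_mk, smul_eq_mul, Prod.mk.injEq]
        constructor <;> [ring; simp [hb0]])⟩
    · rcases lt_trichotomy a 0 with ha | ha | ha
      · exact absurd (h1 ha) (not_le.mpr (hab ▸ ha))
      · exact hv (by simp [ha, hab ▸ ha])
      · exact hnormal ⟨a, ha, Or.inr (Or.inr (by
          simp only [Prod.smul_mk, smul_eq_mul, Prod.mk.injEq]
          constructor <;> [ring; (rw [← hab]; ring)]))⟩
    · -- b < a : then a ≤ 0 (else case B) and a ≥ 0, so a = 0, b < 0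
      have ha : a ≤ 0 := by
        by_contra ha
        push_neg at ha
        exact absurd (h2 ha) (not_le.mpr hab)
      have hb : b < 0 := lt_of_lt_of_le hab ha
      have ha0 : a = 0 := le_antisymm ha (by
        by_contra h
        push_neg at h
        exact absurd (h1 h) (not_le.mpr hb))
      exact hnormal ⟨-b, by linarith, Or.inr (Or.inl (by
        simp only [Prod.smul_mk, smul_eq_mul, Prod.mk.injEq]
        constructor <;> [simp [ha0]; ring]))⟩
  rcases key with ⟨ha, hb⟩ | ⟨ha, hb⟩ | ⟨ha, hb⟩
  · -- vertex 0 is the strict maximizer; use relation at n = m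
    refine ⟨min (-a) (-b), lt_min (by linarith) (by linarith), ?_⟩
    intro x hx y hy h m hm
    obtain ⟨m1, m2⟩ := m
    have ex := hx (m1, m2)
    have ey := hy (m1, m2)
    simp only [Prod.mk_add_mk, add_zero] at ex ey hm ⊢
    have h1 : x (m1 + 1, m2) = y (m1 + 1, m2) := by
      apply h (m1 + 1, m2)
      have := min_le_left (-a) (-b)
      push_cast
      linarith
    have h2 : x (m1, m2 + 1) = y (m1, m2 + 1) := by
      apply h (m1, m2 + 1)
      have := min_le_right (-a) (-b)
      push_cast
      linarith
    linear_combination (exp := 1) ex - ey - h1 - h2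
  · -- vertex e₁ is the strict maximizer; use relation at n = m - e₁
    refine ⟨min a (a - b), lt_min ha (by linarith), ?_⟩
    intro x hx y hy h m hm
    obtain ⟨m1, m2⟩ := m
    have ex := hx (m1 - 1, m2)
    have ey := hy (m1 - 1, m2)
    have hc : m1 - 1 + 1 = m1 := by ring
    simp only [Prod.mk_add_mk, add_zero, hc] at ex ey
    simp only at hm
    have h1 : x (m1 - 1, m2) = y (m1 - 1, m2) := by
      apply h (m1 - 1, m2)
      have := min_le_left a (a - b)
      push_cast
      linarith
    have h2 : x (m1 - 1, m2 + 1) = y (m1 - 1, m2 + 1) := by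
      apply h (m1 - 1, m2 + 1)
      have := min_le_right a (a - b)
      push_cast
      linarith
    linear_combination (exp := 1) ex - ey - h1 - h2
  · -- vertex e₂ is the strict maximizer; use relation at n = m - e₂
    refine ⟨min b (b - a), lt_min ha (by linarith), ?_⟩
    intro x hx y hy h m hm
    obtain ⟨m1, m2⟩ := m
    have ex := hx (m1, m2 - 1)
    have ey := hy (m1, m2 - 1)
    have hc : m2 - 1 + 1 = m2 := by ring
    simp only [Prod.mk_add_mk, add_zero, hc] at ex ey
    simp only at hm
    have h1 : x (m1, m2 - 1) = y (m1, m2 - 1) := by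
      apply h (m1, m2 - 1)
      have := min_le_left b (b - a)
      push_cast
      linarith
    have h2 : x (m1 + 1, m2 - 1) = y (m1 + 1, m2 - 1) := by
      apply h (m1 + 1, m2 - 1)
      have := min_le_right b (b - a)
      push_cast
      linarith
    linear_combination (exp := 1) ex - ey - h1 - h2
end

section
/- Let p be prime and f ∈ 𝔽_p[u₁^{±1}, u₂^{±1}] a Laurent polynomial whose Newton polygon has an edge with outward normal v ∈ ℤ², primitive. Let X_f = {x ∈ 𝔽_p^{ℤ²} : Σ_n f_n x_{m+n} = 0 for all m}. Then the subgroup Y₀ = {x ∈ X_f : x_n = 0 for all n with v·n < 0} is infinite. -/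
/-!
After a unimodular change of coordinates sending `n ↦ v·n` to the first coordinate, a point of
`Y₀` is a sequence of rows `X t : ℤ → 𝔽_p` (`t ≥ 0`), and the relation at level `t` says that the
top edge of `f`, a one-variable Laurent polynomial with at least two terms, maps the row `X t` to
an expression in the rows below it. Such an operator on `𝔽_p^ℤ` is surjective (solve the
recurrence forwards with its top coefficient and backwards with its bottom one) and has a
nonzero kernel, so the rows can be chosen one after the other starting from a nonzero row at
level `0`. Shifting the resulting point upwards gives infinitely many distinct points of `Y₀`.
-/

namespace HalfPlaneSolutions

open Finset

section Semiring

variable {R : Type*} [Semiring R]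

def laurentAct (c : ℤ →₀ R) : (ℤ → R) →+ (ℤ → R) where
  toFun y j := ∑ k ∈ c.support, c k * y (j + k)
  map_zero' := by ext; simp
  map_add' y z := by ext; simp [mul_add, sum_add_distrib]

theorem laurentAct_apply (c : ℤ →₀ R) (y : ℤ → R) (j : ℤ) :
    laurentAct c y j = ∑ k ∈ c.support, c k * y (j + k) := rfl

def halfPlaneSolutions (F : ℤ × ℤ →₀ R) (ℓ : ℤ × ℤ → ℤ) : Set (ℤ × ℤ → R) :=
  {x | (∀ m, ∑ n ∈ F.support, F n * x (m + n) = 0) ∧ ∀ n, ℓ n < 0 → x n = 0}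

theorem sum_support_mul_add_eq_sum_curry (F : ℤ × ℤ →₀ R) (x : ℤ × ℤ → R) (m : ℤ × ℤ) :
    ∑ n ∈ F.support, F n * x (m + n) =
      ∑ i ∈ F.curry.support, laurentAct (F.curry i) (fun k => x (m.1 + i, k)) m.2 := by
  obtain ⟨m₁, m₂⟩ := m
  have := Finsupp.sum_curry_index F (fun i k a => a * x ((m₁, m₂) + (i, k)))
  simpa [Finsupp.sum, laurentAct_apply] using this.symm

theorem comp_mem_halfPlaneSolutions {F : ℤ × ℤ →₀ R} {ℓ : ℤ × ℤ → ℤ} (e : ℤ × ℤ ≃+ ℤ × ℤ)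
    {x : ℤ × ℤ → R} (hx : x ∈ halfPlaneSolutions (F.equivMapDomain e.toEquiv) ℓ) :
    x ∘ e ∈ halfPlaneSolutions F (ℓ ∘ e) := by
  obtain ⟨hrel, hneg⟩ := hx
  refine ⟨fun m => ?_, fun n hn => hneg (e n) hn⟩
  rw [← hrel (e m), show (F.equivMapDomain e.toEquiv).support = F.support.map e.toEquiv.toEmbedding
    from rfl, sum_map]
  simp

end Semiring

section HalfLine

variable {V : Type*} [AddCommGroup V]

def halfLineSol (A : ℤ → V →+ V) (D : Finset ℤ) (s : ℤ) (hD : ∀ i ∈ D, i < s) (B : V → V)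
    (y : V) (t : ℤ) : V :=
  if t < 0 then 0
  else if t = 0 then y
  else B (-∑ i ∈ D.attach, A i (halfLineSol A D s hD B y (t - s + i)))
termination_by t.toNat
decreasing_by
  have := hD i i.2
  omega

variable {A : ℤ → V →+ V} {D : Finset ℤ} {s : ℤ} {hD : ∀ i ∈ D, i < s}

theorem halfLineSol_of_neg (B : V → V) (y : V) {t : ℤ} (ht : t < 0) :
    halfLineSol A D s hD B y t = 0 := by
  rw [halfLineSol, if_pos ht]

theorem halfLineSol_zero (B : V → V) (y : V) : halfLineSol A D s hD B y 0 = y := by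
  rw [halfLineSol, if_neg (lt_irrefl 0), if_pos rfl]

theorem halfLineSol_rel {B : V → V} (hB : Function.RightInverse B (A s)) {y : V}
    (hy : A s y = 0) (m : ℤ) :
    A s (halfLineSol A D s hD B y (m + s)) +
      ∑ i ∈ D, A i (halfLineSol A D s hD B y (m + i)) = 0 := by
  have hlower : ∀ i ∈ D, m + s ≤ 0 → halfLineSol A D s hD B y (m + i) = 0 := fun i hi hm =>
    halfLineSol_of_neg B y (by linarith [hD i hi])
  rcases lt_trichotomy (m + s) 0 with hm | hm | hm
  · rw [halfLineSol_of_neg B y hm, map_zero, zero_add]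
    exact sum_eq_zero fun i hi => by rw [hlower i hi hm.le, map_zero]
  · rw [hm, halfLineSol_zero, hy, zero_add]
    exact sum_eq_zero fun i hi => by rw [hlower i hi hm.le, map_zero]
  · rw [halfLineSol, if_neg (by omega), if_neg (by omega), hB, sum_attach D
      (fun i => A i (halfLineSol A D s hD B y (m + s - s + i)))]
    simp only [add_sub_cancel_right, neg_add_cancel]

theorem infinite_setOf_halfLine_solutions (hD : ∀ i ∈ D, i < s)
    (hs : Function.Surjective (A s)) {y : V} (hy0 : y ≠ 0) (hy : A s y = 0) :
    {X : ℤ → V | (∀ t < 0, X t = 0) ∧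
      ∀ m, A s (X (m + s)) + ∑ i ∈ D, A i (X (m + i)) = 0}.Infinite := by
  let X := halfLineSol A D s hD (Function.surjInv hs) y
  refine Set.infinite_of_injective_forall_mem (f := fun (N : ℕ) t => X (t - N))
    (Function.Injective.of_lt_imp_ne fun N M hNM h => hy0 ?_) fun N => ⟨?_, fun m => ?_⟩
  · have := congrFun h N
    simp only [sub_self, X, halfLineSol_zero] at this
    rw [this, halfLineSol_of_neg _ _ (by omega)]
  · exact fun t ht => halfLineSol_of_neg _ _ (by omega)
  · have := halfLineSol_rel (hD := hD) (Function.rightInverse_surjInv hs) hy (m - N)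
    simpa only [sub_add_eq_add_sub] using this

end HalfLine

section Field

variable {K : Type*} [Field K]

/-- Forwards from the window `[lo, hi)` the recurrence is solved for its top term, backwards for
its bottom term. -/
def laurentSol (c : ℤ →₀ K) (lo hi : ℤ) (hlo : ∀ k ∈ c.support, lo ≤ k)
    (hhi : ∀ k ∈ c.support, k ≤ hi) (g w : ℤ → K) (i : ℤ) : K :=
  if hi ≤ i then
    (c hi)⁻¹ * (g (i - hi) - ∑ k ∈ (c.support.erase hi).attach,
      c k * laurentSol c lo hi hlo hhi g w (i - hi + k))
  else if i < lo then
    (c lo)⁻¹ * (g (i - lo) - ∑ k ∈ (c.support.erase lo).attach,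
      c k * laurentSol c lo hi hlo hhi g w (i - lo + k))
  else w i
termination_by (i - hi + 1).toNat + (lo - i).toNat
decreasing_by
  all_goals
    have := hlo k (mem_of_mem_erase k.2)
    have := hhi k (mem_of_mem_erase k.2)
    have := ne_of_mem_erase k.2
    omega

theorem laurentAct_laurentSol (c : ℤ →₀ K) {lo hi : ℤ} (hlo : ∀ k ∈ c.support, lo ≤ k)
    (hhi : ∀ k ∈ c.support, k ≤ hi) (hlo_mem : lo ∈ c.support) (hhi_mem : hi ∈ c.support)
    (g w : ℤ → K) : laurentAct c (laurentSol c lo hi hlo hhi g w) = g := by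
  ext j
  rw [laurentAct_apply]
  rcases le_or_gt 0 j with hj | hj
  · rw [← add_sum_erase _ _ hhi_mem, laurentSol, if_pos (by omega), sum_attach _
      (fun k => c k * laurentSol c lo hi hlo hhi g w (j + hi - hi + k))]
    simp only [add_sub_cancel_right]
    field_simp [Finsupp.mem_support_iff.mp hhi_mem]
    ring
  · have := hhi lo hlo_mem
    rw [← add_sum_erase _ _ hlo_mem, laurentSol, if_neg (by omega), if_pos (by omega), sum_attach _
      (fun k => c k * laurentSol c lo hi hlo hhi g w (j + lo - lo + k))]
    simp only [add_sub_cancel_right]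
    field_simp [Finsupp.mem_support_iff.mp hlo_mem]
    ring

theorem laurentSol_of_mem_Ico (c : ℤ →₀ K) {lo hi : ℤ} (hlo : ∀ k ∈ c.support, lo ≤ k)
    (hhi : ∀ k ∈ c.support, k ≤ hi) (g w : ℤ → K) {i : ℤ} (hmem : i ∈ Set.Ico lo hi) :
    laurentSol c lo hi hlo hhi g w i = w i := by
  rw [laurentSol, if_neg (by simp at hmem; omega), if_neg (by simp at hmem; omega)]

theorem exists_laurentAct_eq_of_eqOn (c : ℤ →₀ K) (hc : c.support.Nonempty) (g w : ℤ → K) :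
    ∃ y, laurentAct c y = g ∧ Set.EqOn y w (Set.Ico (c.support.min' hc) (c.support.max' hc)) :=
  ⟨_, laurentAct_laurentSol c (fun k => c.support.min'_le k) (fun k => c.support.le_max' k)
    (c.support.min'_mem hc) (c.support.max'_mem hc) g w,
    fun _ => laurentSol_of_mem_Ico c _ _ g w⟩

theorem laurentAct_surjective {c : ℤ →₀ K} (hc : c ≠ 0) : Function.Surjective (laurentAct c) :=
  fun g => (exists_laurentAct_eq_of_eqOn c (Finsupp.support_nonempty_iff.mpr hc) g 0).imp
    fun _ => And.left

theorem exists_ne_zero_laurentAct_eq_zero {c : ℤ →₀ K} (hc : 1 < #c.support) :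
    ∃ y ≠ 0, laurentAct c y = 0 := by
  have hne : c.support.Nonempty := card_pos.mp (by omega)
  obtain ⟨y, hy, hw⟩ := exists_laurentAct_eq_of_eqOn c hne 0 1
  refine ⟨y, fun h => ?_, hy⟩
  have := hw ⟨le_rfl, c.support.min'_lt_max'_of_card hc⟩
  simp [h] at this

theorem infinite_halfPlaneSolutions_fst (F : ℤ × ℤ →₀ K)
    (hedge : ∃ a ∈ F.support, ∃ b ∈ F.support, a ≠ b ∧
      (∀ n ∈ F.support, n.1 ≤ a.1) ∧ b.1 = a.1) :
    (halfPlaneSolutions F Prod.fst).Infinite := by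
  obtain ⟨a, ha, b, hb, hab, hmax, hba⟩ := hedge
  have htop : 1 < #(F.curry a.1).support := one_lt_card.mpr
    ⟨a.2, by simpa using ha, b.2, by simpa [← hba] using hb, fun h => hab (Prod.ext hba.symm h)⟩
  have hs : a.1 ∈ F.curry.support := by
    rw [Finsupp.support_curry]
    exact mem_image_of_mem _ ha
  have hD : ∀ i ∈ F.curry.support.erase a.1, i < a.1 := by
    intro i hi
    have := mem_of_mem_erase hi
    rw [Finsupp.support_curry, mem_image] at this
    obtain ⟨n, hn, rfl⟩ := this
    exact lt_of_le_of_ne (hmax n hn) (ne_of_mem_erase hi)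
  obtain ⟨y, hy0, hy⟩ := exists_ne_zero_laurentAct_eq_zero htop
  refine ((infinite_setOf_halfLine_solutions (A := fun i => laurentAct (F.curry i)) hD
    (laurentAct_surjective (Finsupp.support_nonempty_iff.mp (card_pos.mp (zero_lt_one.trans htop))))
    hy0 hy).image Function.uncurry_injective.injOn).mono ?_
  rintro _ ⟨X, ⟨hneg, hrel⟩, rfl⟩
  refine ⟨fun m => ?_, fun n hn => congrFun (hneg n.1 hn) n.2⟩
  rw [sum_support_mul_add_eq_sum_curry, ← add_sum_erase _ _ hs]
  simpa using congrFun (hrel m.1) m.2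

end Field

theorem exists_addEquiv_fst_eq_dotProduct (v : ℤ × ℤ) (hv : Int.gcd v.1 v.2 = 1) :
    ∃ e : ℤ × ℤ ≃+ ℤ × ℤ, ∀ n, (e n).1 = v.1 * n.1 + v.2 * n.2 := by
  obtain ⟨α, β, h⟩ := Int.isCoprime_iff_gcd_eq_one.mpr hv
  exact ⟨{ toFun n := (v.1 * n.1 + v.2 * n.2, -β * n.1 + α * n.2)
           invFun n := (α * n.1 - v.2 * n.2, β * n.1 + v.1 * n.2)
           left_inv n := Prod.ext (by linear_combination n.1 * h) (by linear_combination n.2 * h)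
           right_inv n := Prod.ext (by linear_combination n.1 * h) (by linear_combination n.2 * h)
           map_add' m n := by ext <;> dsimp only [Prod.fst_add, Prod.snd_add] <;> ring },
    fun _ => rfl⟩

end HalfPlaneSolutions

open HalfPlaneSolutions in
/-- If `v` is a primitive outward normal of an edge of the Newton polygon of
`f ∈ 𝔽_p[u₁^{±1},u₂^{±1}]` (the face of the support maximizing `n ↦ v·n` contains at least
two points), then the subgroup `Y₀ = {x ∈ X_f : x_n = 0 for v·n < 0}` of the shift system
`X_f = {x ∈ 𝔽_p^{ℤ²} : Σ_n f_n x_{m+n} = 0}` is infinite. -/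
theorem edge_normal_halfplane_subgroup_infinite (p : ℕ) [Fact p.Prime]
    (f : (ℤ × ℤ) →₀ ZMod p) (v : ℤ × ℤ) (hprim : Int.gcd v.1 v.2 = 1)
    (hedge : ∃ a ∈ f.support, ∃ b ∈ f.support, a ≠ b ∧
      (∀ n ∈ f.support, v.1 * n.1 + v.2 * n.2 ≤ v.1 * a.1 + v.2 * a.2) ∧
      v.1 * b.1 + v.2 * b.2 = v.1 * a.1 + v.2 * a.2) :
    {x : (ℤ × ℤ) → ZMod p |
      (∀ m : ℤ × ℤ, ∑ n ∈ f.support, f n * x (m + n) = 0) ∧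
      (∀ n : ℤ × ℤ, v.1 * n.1 + v.2 * n.2 < 0 → x n = 0)}.Infinite := by
  obtain ⟨a, ha, b, hb, hab, hmax, hba⟩ := hedge
  obtain ⟨e, he⟩ := exists_addEquiv_fst_eq_dotProduct v hprim
  set F := f.equivMapDomain e.toEquiv
  have hF : ∀ n, e n ∈ F.support ↔ n ∈ f.support := by simp [F]
  have hedgeF : ∃ a ∈ F.support, ∃ b ∈ F.support, a ≠ b ∧
      (∀ n ∈ F.support, n.1 ≤ a.1) ∧ b.1 = a.1 := by
    refine ⟨e a, (hF a).2 ha, e b, (hF b).2 hb, e.injective.ne hab, fun n hn => ?_, by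
      rw [he, he, hba]⟩
    rw [← e.apply_symm_apply n, he, he]
    exact hmax _ ((hF _).1 (by rwa [e.apply_symm_apply]))
  change (halfPlaneSolutions f fun n => v.1 * n.1 + v.2 * n.2).Infinite
  rw [show (fun n : ℤ × ℤ => v.1 * n.1 + v.2 * n.2) = Prod.fst ∘ e from funext fun n => (he n).symm]
  refine ((infinite_halfPlaneSolutions_fst F hedgeF).image
    e.surjective.injective_comp_right.injOn).mono ?_
  rintro _ ⟨x, hx, rfl⟩
  exact comp_mem_halfPlaneSolutions e hx
end
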